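/- arXiv:2505.00680 — 5 statements merged into one kernel-verified Lean document; each statement's English description precedes it below -/
import Mathlib

section
/- Let $p$ be a prime and $f(T) = \sum_{n \geq 0} \frac{a_n}{n+1} T^{n+1}$ a power series with all $a_n$ in the ring of integers of an algebraic closure of $\mathbb{Q}_p$, with $v(a_0) = \alpha < \infty$ (valuation normalized so $v(p) = 1$). Then any nonzero root of $f$ in the closed unit disk has valuation at most $\alpha + \log(2)/\log(p)$. -/
/-!
Since the `p`-part of `n + 1` is at most `n + 1`, we have `‖1 / (n + 1)‖ ≤ n + 1`, so the
`n`-th term of `f(x)` has norm at most `(n + 1) ‖x‖ ^ (n + 1)`. When `‖x‖ ≤ 1/2` every term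
with `n ≥ 1` is then at most `2 ‖x‖ ^ 2`, and at a root the ultrametric inequality gives
`‖a₀‖ ‖x‖ ≤ 2 ‖x‖ ^ 2`; when `‖x‖ > 1/2`, already `‖a₀‖ ≤ 1 < 2 ‖x‖`. Either way
`‖a₀‖ ≤ 2 ‖x‖`, which is `v(x) ≤ α + log_p 2`.
-/

open IsUltrametricDist

section NormNatCast

variable {R : Type*} [NormedRing R] [NormMulClass R] [NormOneClass R] [IsUltrametricDist R]

theorem norm_natCast_eq_one_of_not_dvd {p m : ℕ} (hp : p.Prime) (hpR : ‖(p : R)‖ < 1)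
    (hpm : ¬ p ∣ m) : ‖(m : R)‖ = 1 := by
  obtain ⟨u, v, huv⟩ := (Nat.Coprime.isCoprime (hp.coprime_iff_not_dvd.mpr hpm)).symm
  have hbezout : (u : R) * m + v * p = 1 := by exact_mod_cast congrArg (Int.cast : ℤ → R) huv
  have hvp : ‖(v : R) * p‖ < 1 := by
    rw [norm_mul]
    exact mul_lt_one_of_nonneg_of_lt_one_right (norm_intCast_le_one R v) (norm_nonneg _) hpR
  have hum : 1 ≤ ‖(u : R) * m‖ := by
    have := norm_add_le_max ((u : R) * m) (v * p)
    rw [hbezout, norm_one] at this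
    exact (le_max_iff.mp this).resolve_right hvp.not_ge
  refine le_antisymm (norm_natCast_le_one R m) ?_
  rw [norm_mul] at hum
  nlinarith [norm_intCast_le_one R u, norm_nonneg (m : R)]

theorem inv_natCast_le_norm_natCast {p n : ℕ} (hp : p.Prime) (hpR : ‖(p : R)‖ = (p : ℝ)⁻¹)
    (hn : n ≠ 0) : (n : ℝ)⁻¹ ≤ ‖(n : R)‖ := by
  have hpR' : ‖(p : R)‖ < 1 := hpR ▸ inv_lt_one_of_one_lt₀ (by exact_mod_cast hp.one_lt)
  obtain ⟨e, m, hpm, rfl⟩ := Nat.exists_eq_pow_mul_and_not_dvd hn p hp.ne_one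
  have hm : 1 ≤ m := Nat.one_le_iff_ne_zero.mpr (right_ne_zero_of_mul hn)
  push_cast
  rw [norm_mul, norm_natCast_eq_one_of_not_dvd hp hpR' hpm, mul_one, norm_pow, hpR, inv_pow]
  have : 0 < (p : ℝ) ^ e := pow_pos (by exact_mod_cast hp.pos) e
  gcongr
  exact le_mul_of_one_le_right this.le (by exact_mod_cast hm)

end NormNatCast

theorem natCast_add_two_mul_pow_le {t : ℝ} (ht₀ : 0 ≤ t) (ht : t ≤ 1 / 2) (n : ℕ) :
    ((n : ℝ) + 2) * t ^ (n + 2) ≤ 2 * t ^ 2 := by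
  have hn : (n : ℝ) + 2 ≤ 2 * 2 ^ n := by
    have := Nat.lt_two_pow_self (n := n + 1)
    rw [pow_succ] at this
    exact_mod_cast (by omega : n + 2 ≤ 2 * 2 ^ n)
  calc ((n : ℝ) + 2) * t ^ (n + 2) = ((n : ℝ) + 2) * t ^ n * t ^ 2 := by ring
    _ ≤ (2 * 2 ^ n) * (1 / 2) ^ n * t ^ 2 := by gcongr
    _ = 2 * t ^ 2 := by rw [mul_assoc 2, ← mul_pow]; norm_num

section IntegratedSeries

variable {K : Type*} [NormedDivisionRing K] [IsUltrametricDist K] {p : ℕ}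

theorem norm_div_natCast_add_one_mul_pow_le (hp : p.Prime) (hpK : ‖(p : K)‖ = (p : ℝ)⁻¹)
    {a : K} (ha : ‖a‖ ≤ 1) (x : K) (n : ℕ) :
    ‖a / ((n : K) + 1) * x ^ (n + 1)‖ ≤ ((n : ℝ) + 1) * ‖x‖ ^ (n + 1) := by
  have hn : ((n : ℝ) + 1)⁻¹ ≤ ‖(n : K) + 1‖ := by
    exact_mod_cast inv_natCast_le_norm_natCast (R := K) hp hpK n.succ_ne_zero
  have hn₀ : 0 < ‖(n : K) + 1‖ := (inv_pos.mpr (by positivity)).trans_le hn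
  rw [norm_mul, norm_div, norm_pow]
  gcongr
  rw [div_le_iff₀ hn₀]
  calc ‖a‖ ≤ 1 := ha
    _ ≤ ((n : ℝ) + 1) * ‖(n : K) + 1‖ := by
      rwa [← inv_mul_le_iff₀ (by positivity), mul_one]

theorem norm_le_two_mul_norm_of_hasSum_eq_zero (hp : p.Prime) (hpK : ‖(p : K)‖ = (p : ℝ)⁻¹)
    {a : ℕ → K} (ha : ∀ n, ‖a n‖ ≤ 1) {x : K} (hx : x ≠ 0)
    (hroot : HasSum (fun n : ℕ => a n / ((n : K) + 1) * x ^ (n + 1)) 0) :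
    ‖a 0‖ ≤ 2 * ‖x‖ := by
  rcases le_or_gt (1 / 2) ‖x‖ with hx_large | hx_small
  · linarith [ha 0]
  have htail : a 0 * x = -∑' n : ℕ, a (n + 1) / (((n + 1 : ℕ) : K) + 1) * x ^ (n + 1 + 1) := by
    have := hroot.summable.tsum_eq_zero_add
    rw [hroot.tsum_eq] at this
    simpa [eq_neg_iff_add_eq_zero] using this.symm
  have hterm (n : ℕ) :
      ‖a (n + 1) / (((n + 1 : ℕ) : K) + 1) * x ^ (n + 1 + 1)‖ ≤ 2 * ‖x‖ ^ 2 := by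
    refine (norm_div_natCast_add_one_mul_pow_le hp hpK (ha _) x (n + 1)).trans ?_
    calc (((n + 1 : ℕ) : ℝ) + 1) * ‖x‖ ^ (n + 1 + 1) = ((n : ℝ) + 2) * ‖x‖ ^ (n + 2) := by
          push_cast; ring
      _ ≤ 2 * ‖x‖ ^ 2 := natCast_add_two_mul_pow_le (norm_nonneg x) hx_small.le n
  have h : ‖a 0‖ * ‖x‖ ≤ 2 * ‖x‖ * ‖x‖ := by
    rw [← norm_mul, htail, norm_neg, mul_assoc, ← sq]
    exact norm_tsum_le_of_forall_le_of_nonneg (by positivity) hterm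
  exact le_of_mul_le_mul_right h (norm_pos_iff.mpr hx)

end IntegratedSeries

theorem newton_polygon_smallest_root_bound_general
    (p : ℕ) (hp : p.Prime)
    (K : Type*) [NormedField K] [IsUltrametricDist K]
    (hpnorm : ‖(p : K)‖ = (p : ℝ)⁻¹)
    (a : ℕ → K) (hint : ∀ n, ‖a n‖ ≤ 1)
    (α : ℝ) (hα : ‖a 0‖ = (p : ℝ) ^ (-α))
    (x : K) (hx0 : x ≠ 0)
    (hroot : HasSum (fun n : ℕ => a n / ((n : K) + 1) * x ^ (n + 1)) 0) :
    -Real.logb p ‖x‖ ≤ α + Real.log 2 / Real.log p := by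
  have hp₁ : (1 : ℝ) < p := by exact_mod_cast hp.one_lt
  have hbound := norm_le_two_mul_norm_of_hasSum_eq_zero hp hpnorm hint hx0 hroot
  calc -Real.logb p ‖x‖ ≤ -Real.logb p (‖a 0‖ / 2) := by
        gcongr
        · rw [hα]; positivity
        · linarith
    _ = α + Real.log 2 / Real.log p := by
        rw [Real.logb_div (by rw [hα]; positivity) two_ne_zero, hα,
          Real.logb_rpow (by positivity) hp₁.ne', Real.logb]
        ring

/-- Let `p` be a prime and `f(T) = ∑ aₙ/(n+1) Tⁿ⁺¹` a power series whose
coefficients `aₙ` are integral elements (norm at most 1) in a nonarchimedean field extending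
the `p`-adic numbers (so `‖p‖ = p⁻¹`), with `v(a₀) = α` (i.e. `‖a₀‖ = p^(-α)`).  Then any
nonzero root `x` of `f` in the closed unit disk has valuation
`v(x) = -log_p ‖x‖ ≤ α + log 2 / log p`. -/
theorem newton_polygon_smallest_root_bound
    (p : ℕ) (hp : p.Prime)
    (K : Type*) [NormedField K] [IsUltrametricDist K] [CharZero K]
    (hpnorm : ‖(p : K)‖ = (p : ℝ)⁻¹)
    (a : ℕ → K) (hint : ∀ n, ‖a n‖ ≤ 1)
    (α : ℝ) (hα : ‖a 0‖ = (p : ℝ) ^ (-α))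
    (x : K) (hx0 : x ≠ 0) (hx1 : ‖x‖ ≤ 1)
    (hroot : HasSum (fun n : ℕ => a n / ((n : K) + 1) * x ^ (n + 1)) 0) :
    -Real.logb p ‖x‖ ≤ α + Real.log 2 / Real.log p :=
  newton_polygon_smallest_root_bound_general p hp K hpnorm a hint α hα x hx0 hroot
end

section
/- Let $\mathcal{O}$ be the imaginary quadratic order of discriminant $D = c^2 D_K$ (with $D_K$ a fundamental discriminant and $c$ the conductor), written as $\mathcal{O} = \mathbb{Z}[\alpha]$ where $\alpha$ has minimal polynomial $P_{\mathcal{O}}$. Let $p$ be a prime dividing $c$ and $k \geq 1$. Then the map $\lambda \mapsto (p^k, \lambda - \alpha)$ gives a bijection between residues $\lambda$ modulo $p^k$ satisfying $P_{\mathcal{O}}(\lambda) \equiv 0 \pmod{p^k}$ but $P_{\mathcal{O}}(\lambda) \not\equiv 0 \pmod{p^{k+1}}$, and invertible ideals $I$ of $\mathcal{O}$ with $\mathcal{O}/I$ cyclic of order $p^k$. -/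
open Polynomial

/-- A fundamental (quadratic) discriminant. -/
def IsFundamentalDiscriminant (d : ℤ) : Prop :=
  (d % 4 = 1 ∧ Squarefree d) ∨
    (d % 4 = 0 ∧ Squarefree (d / 4) ∧ ((d / 4) % 4 = 2 ∨ (d / 4) % 4 = 3))

/-- The minimal polynomial `P_𝒪` of the canonical generator `α_𝒪` of the quadratic order of
discriminant `D = c²·D_K`: it is `X² - D/4` if `4 ∣ D_K`, and
`X² - cX + c²(1 - D_K)/4` otherwise. -/
noncomputable def ordPoly (DK : ℤ) (c : ℕ) : Polynomial ℤ :=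
  if 4 ∣ DK then X ^ 2 - C ((c : ℤ) ^ 2 * (DK / 4))
  else X ^ 2 - C (c : ℤ) * X + C ((c : ℤ) ^ 2 * ((1 - DK) / 4))

/-- The quadratic order `𝒪 = ℤ[α_𝒪]` of discriminant `c²·D_K`. -/
noncomputable abbrev QuadOrder (DK : ℤ) (c : ℕ) := AdjoinRoot (ordPoly DK c)

/-!
Write `𝒪 = ℤ[α]` with `α² = tα - n`; for `p ∣ c` we have `p ∣ t` and `p ∣ n`. Whenever
`M ∣ P(λ)`, the evaluation `α ↦ λ` identifies `𝒪/(M, λ - α)` with `ℤ/M`, and `λ` is recovered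
modulo `M`. Conversely, a finite ring with cyclic additive group is a quotient of `ℤ`, so an
ideal `I` with `𝒪/I` cyclic of order `M` contains `λ - α` for an integer `λ`, and is `(M, λ - α)`.

Invertibility is decided by the exact power of `p` in `P(λ)`. If `P(λ) = p^k u` with `p ∤ u`,
the conjugate ideal `(p^k, t - λ - α)` multiplies `(p^k, λ - α)` to the principal ideal `(p^k)`.
If instead `p^{k+1} ∣ P(λ)`, then `p ∣ λ`, `(λ - α)² ∈ p·(p^k, λ - α)`, and `(λ - α)/p`
multiplies the ideal into itself; cancelling an invertible ideal would give `p ∣ λ - α` in `𝒪`,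
which is false since `1, α` is a `ℤ`-basis.
-/

open scoped nonZeroDivisors

section CyclicRing

variable (S : Type*) [Ring S] [IsAddCyclic S]

theorem addOrderOf_one_eq_natCard_of_isAddCyclic : addOrderOf (1 : S) = Nat.card S := by
  refine Nat.dvd_antisymm (addOrderOf_dvd_natCard 1) ?_
  rw [← IsAddCyclic.exponent_eq_card]
  refine AddMonoid.exponent_dvd_of_forall_nsmul_eq_zero fun x => ?_
  rw [← one_mul x, ← smul_mul_assoc, addOrderOf_nsmul_eq_zero, zero_mul]

theorem charP_natCard_of_isAddCyclic : CharP S (Nat.card S) :=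
  addOrderOf_one_eq_natCard_of_isAddCyclic S ▸ CharP.addOrderOf_one S

theorem intCast_surjective_of_isAddCyclic [Finite S] :
    Function.Surjective (Int.cast : ℤ → S) := by
  have htop : AddSubgroup.zmultiples (1 : S) = ⊤ := AddSubgroup.eq_top_of_card_eq _ <| by
    rw [Nat.card_zmultiples, addOrderOf_one_eq_natCard_of_isAddCyclic]
  intro x
  obtain ⟨m, hm⟩ := AddSubgroup.mem_zmultiples_iff.mp (htop ▸ AddSubgroup.mem_top x)
  exact ⟨m, by rw [← hm, zsmul_one]⟩

end CyclicRing

namespace FractionalIdeal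

variable {R K : Type*} [CommRing R] [CommRing K] [Algebra R K] [IsFractionRing R K]

theorem isUnit_coeIdeal_of_mul_eq_span_singleton {I J : Ideal R} {x : R} (hx : x ∈ R⁰)
    (h : I * J = Ideal.span {x}) : IsUnit (I : FractionalIdeal R⁰ K) := by
  have hxK : IsUnit (algebraMap R K x) := IsLocalization.map_units K ⟨x, hx⟩
  have hspan : IsUnit (spanSingleton R⁰ (algebraMap R K x)) :=
    .of_mul_eq_one (spanSingleton R⁰ ↑hxK.unit⁻¹) <| by
      rw [spanSingleton_mul_spanSingleton, hxK.mul_val_inv, spanSingleton_one]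
  rw [← coeIdeal_span_singleton, ← h, coeIdeal_mul] at hspan
  exact isUnit_of_mul_isUnit_left hspan

theorem le_of_mul_le_mul_right_of_isUnit {I a b : Ideal R} (hI : IsUnit (I : FractionalIdeal R⁰ K))
    (h : a * I ≤ b * I) : a ≤ b := by
  rw [← coeIdeal_le_coeIdeal K]
  have h' := mul_le_mul_left ((coeIdeal_le_coeIdeal K).mpr h) (↑hI.unit⁻¹ : FractionalIdeal R⁰ K)
  simpa only [coeIdeal_mul, mul_assoc, IsUnit.mul_val_inv, mul_one] using h'

end FractionalIdeal

namespace AdjoinRoot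

variable {q : ℤ[X]}

theorem intCast_sub_root_dvd_intCast_eval_sub_mk (f : ℤ[X]) (lam : ℤ) :
    ((lam : AdjoinRoot q) - root q) ∣ ((f.eval lam : ℤ) : AdjoinRoot q) - mk q f := by
  have h := sub_dvd_eval_sub (lam : AdjoinRoot q) (root q) (f.map (Int.castRingHom _))
  have hmk : (f.map (Int.castRingHom _)).eval (root q) = mk q f := by
    rw [eval_map, ← aeval_eq, aeval_def, Subsingleton.elim (algebraMap ℤ _) (Int.castRingHom _)]
  rwa [hmk, eval_map, eval₂_at_intCast] at h

theorem intCast_mem_nonZeroDivisors (hq : q.Monic) {m : ℤ} (hm : m ≠ 0) :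
    (m : AdjoinRoot q) ∈ (AdjoinRoot q)⁰ := by
  have := hq.free_adjoinRoot
  rw [mem_nonZeroDivisors_iff_right]
  intro z hz
  rw [mul_comm, ← zsmul_eq_mul] at hz
  exact (smul_eq_zero.mp hz).resolve_left hm

theorem not_intCast_dvd_intCast_sub_root (hq : q.Monic) (hdeg : 1 < q.natDegree) {d : ℤ}
    (hd : ¬IsUnit d) (lam : ℤ) : ¬(d : AdjoinRoot q) ∣ (lam : AdjoinRoot q) - root q := by
  rintro ⟨r, hr⟩
  have hmod : (C lam - X) %ₘ q = C lam - X := by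
    rw [modByMonic_eq_self_iff hq, degree_eq_natDegree hq.ne_zero]
    calc (C lam - X).degree ≤ 1 := by compute_degree
      _ < (q.natDegree : WithBot ℕ) := mod_cast hdeg
  have h := congrArg (fun z => (modByMonicHom hq z).coeff 1) hr
  rw [← zsmul_eq_mul, show (lam : AdjoinRoot q) - root q = mk q (C lam - X) by simp] at h
  simp only [modByMonicHom_mk, hmod, map_zsmul, coeff_smul, coeff_sub, coeff_C, coeff_X_one,
    smul_eq_mul] at h
  exact hd (.of_mul_eq_one (-(modByMonicHom hq r).coeff 1) (by simp at h; linarith))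

variable (q) in
noncomputable def rootIdeal (M : ℕ) (lam : ℤ) : Ideal (AdjoinRoot q) :=
  Ideal.span {(M : AdjoinRoot q), (lam : AdjoinRoot q) - root q}

variable (q) in
theorem natCast_mem_rootIdeal (M : ℕ) (lam : ℤ) : (M : AdjoinRoot q) ∈ rootIdeal q M lam :=
  Ideal.subset_span (by simp)

variable (q) in
theorem intCast_sub_root_mem_rootIdeal (M : ℕ) (lam : ℤ) :
    (lam : AdjoinRoot q) - root q ∈ rootIdeal q M lam :=
  Ideal.subset_span (by simp)

theorem intCast_eval_mem_of_sub_root_mem {I : Ideal (AdjoinRoot q)} {lam : ℤ}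
    (hroot : (lam : AdjoinRoot q) - root q ∈ I) : ((q.eval lam : ℤ) : AdjoinRoot q) ∈ I := by
  obtain ⟨g, hg⟩ := intCast_sub_root_dvd_intCast_eval_sub_mk (q := q) q lam
  rw [mk_self, sub_zero] at hg
  exact hg ▸ I.mul_mem_right g hroot

theorem eq_rootIdeal_of_intCast_mem_iff {I : Ideal (AdjoinRoot q)} {M : ℕ} {lam : ℤ}
    (hroot : (lam : AdjoinRoot q) - root q ∈ I)
    (hint : ∀ m : ℤ, (m : AdjoinRoot q) ∈ I ↔ (M : ℤ) ∣ m) : I = rootIdeal q M lam := by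
  refine le_antisymm (fun z hz => ?_) ?_
  · obtain ⟨f, rfl⟩ := mk_surjective z
    obtain ⟨g, hg⟩ := intCast_sub_root_dvd_intCast_eval_sub_mk (q := q) f lam
    have hfI : ((f.eval lam : ℤ) : AdjoinRoot q) ∈ I := by
      have := I.add_mem (I.mul_mem_right g hroot) hz
      rwa [← hg, sub_add_cancel] at this
    obtain ⟨u, hu⟩ := (hint _).mp hfI
    have hf : mk q f = u * M - g * ((lam : AdjoinRoot q) - root q) := by
      rw [hu] at hg; push_cast at hg; linear_combination -hg
    rw [hf]
    exact sub_mem (Ideal.mul_mem_left _ _ (natCast_mem_rootIdeal q M lam))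
      (Ideal.mul_mem_left _ _ (intCast_sub_root_mem_rootIdeal q M lam))
  · rw [rootIdeal, Ideal.span_le, Set.insert_subset_iff, Set.singleton_subset_iff]
    exact ⟨by exact_mod_cast (hint M).mpr dvd_rfl, hroot⟩

section EvalZMod

variable {M : ℕ} {lam : ℤ}

noncomputable def evalZMod (hd : (M : ℤ) ∣ q.eval lam) : AdjoinRoot q →+* ZMod M :=
  lift (Int.castRingHom _) (lam : ZMod M) <| by
    rw [eval₂_at_intCast]
    exact (ZMod.intCast_zmod_eq_zero_iff_dvd _ M).mpr hd

theorem evalZMod_intCast (hd : (M : ℤ) ∣ q.eval lam) (m : ℤ) :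
    evalZMod hd (m : AdjoinRoot q) = m :=
  map_intCast _ m

theorem ker_evalZMod (hd : (M : ℤ) ∣ q.eval lam) :
    RingHom.ker (evalZMod hd) = rootIdeal q M lam := by
  refine eq_rootIdeal_of_intCast_mem_iff ?_ fun m => ?_
  · rw [RingHom.mem_ker, map_sub, evalZMod_intCast, evalZMod, lift_root, sub_self]
  · rw [RingHom.mem_ker, evalZMod_intCast, ZMod.intCast_zmod_eq_zero_iff_dvd]

theorem intCast_mem_rootIdeal_iff (hd : (M : ℤ) ∣ q.eval lam) (m : ℤ) :
    (m : AdjoinRoot q) ∈ rootIdeal q M lam ↔ (M : ℤ) ∣ m := by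
  rw [← ker_evalZMod hd, RingHom.mem_ker, evalZMod_intCast, ZMod.intCast_zmod_eq_zero_iff_dvd]

noncomputable def quotRootIdealEquiv (hd : (M : ℤ) ∣ q.eval lam) :
    (AdjoinRoot q ⧸ rootIdeal q M lam) ≃+* ZMod M :=
  (Ideal.quotEquivOfEq (ker_evalZMod hd).symm).trans <|
    RingHom.quotientKerEquivOfSurjective fun x =>
      ⟨(x.cast : ℤ), by rw [evalZMod_intCast, ZMod.intCast_zmod_cast]⟩

theorem natCard_quot_rootIdeal (hd : (M : ℤ) ∣ q.eval lam) :
    Nat.card (AdjoinRoot q ⧸ rootIdeal q M lam) = M := by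
  rw [Nat.card_congr (quotRootIdealEquiv hd).toEquiv, Nat.card_zmod]

theorem isAddCyclic_quot_rootIdeal (hd : (M : ℤ) ∣ q.eval lam) :
    IsAddCyclic (AdjoinRoot q ⧸ rootIdeal q M lam) :=
  isAddCyclic_of_surjective (quotRootIdealEquiv hd).symm.toAddMonoidHom
    (quotRootIdealEquiv hd).symm.surjective

end EvalZMod

theorem exists_eq_rootIdeal_of_isAddCyclic {I : Ideal (AdjoinRoot q)}
    [IsAddCyclic (AdjoinRoot q ⧸ I)] {M : ℕ} (hM : M ≠ 0)
    (hcard : Nat.card (AdjoinRoot q ⧸ I) = M) :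
    ∃ lam : ℤ, 0 ≤ lam ∧ lam < M ∧ (M : ℤ) ∣ q.eval lam ∧ I = rootIdeal q M lam := by
  have : Finite (AdjoinRoot q ⧸ I) := Nat.finite_of_card_ne_zero (hcard ▸ hM)
  have : CharP (AdjoinRoot q ⧸ I) M := hcard ▸ charP_natCard_of_isAddCyclic _
  have hint (m : ℤ) : (m : AdjoinRoot q) ∈ I ↔ (M : ℤ) ∣ m := by
    rw [← Ideal.Quotient.eq_zero_iff_mem, map_intCast, CharP.intCast_eq_zero_iff _ M]
  obtain ⟨m, hm⟩ := intCast_surjective_of_isAddCyclic _ (Ideal.Quotient.mk I (root q))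
  have hroot : ((m % M : ℤ) : AdjoinRoot q) - root q ∈ I := by
    rw [← Ideal.Quotient.eq_zero_iff_mem, map_sub, map_intCast, ← hm, sub_eq_zero,
      CharP.intCast_eq_intCast _ M]
    exact Int.mod_modEq m M
  have hM' : (0 : ℤ) < M := by exact_mod_cast Nat.pos_of_ne_zero hM
  exact ⟨m % M, Int.emod_nonneg m hM'.ne', Int.emod_lt_of_pos m hM',
    (hint _).mp (intCast_eval_mem_of_sub_root_mem hroot),
    eq_rootIdeal_of_intCast_mem_iff hroot hint⟩

section Quadratic

variable {t n : ℤ} (hq : q = X ^ 2 - C t * X + C n)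
include hq

theorem monic_of_eq_quadratic : q.Monic := by
  subst hq; monicity!

theorem natDegree_of_eq_quadratic : q.natDegree = 2 := by
  subst hq; compute_degree!

theorem intCast_sub_root_mul_intCast_sub_root (lam : ℤ) :
    ((lam : AdjoinRoot q) - root q) * (((t - lam : ℤ) : AdjoinRoot q) - root q) =
      -((q.eval lam : ℤ) : AdjoinRoot q) := by
  have h : mk q (X ^ 2 - C t * X + C n) = 0 := mk_eq_zero.mpr (hq ▸ dvd_rfl)
  simp only [map_add, map_sub, map_mul, map_pow, mk_X, mk_C] at h
  simp only [eq_intCast] at h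
  simp only [hq, eval_add, eval_sub, eval_mul, eval_pow, eval_X, eval_C]
  push_cast
  linear_combination h

theorem rootIdeal_mul_rootIdeal_sub {M : ℕ} {lam u : ℤ} (hu : q.eval lam = M * u)
    (hcop : IsCoprime (M : ℤ) u) :
    rootIdeal q M lam * rootIdeal q M (t - lam) = Ideal.span {(M : AdjoinRoot q)} := by
  have hprod := intCast_sub_root_mul_intCast_sub_root hq lam
  rw [hu, Int.cast_mul, Int.cast_natCast] at hprod
  apply le_antisymm
  · rw [rootIdeal, rootIdeal, Ideal.span_pair_mul_span_pair, Ideal.span_le]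
    rintro x (rfl | rfl | rfl | rfl) <;> rw [SetLike.mem_coe, Ideal.mem_span_singleton]
    · exact dvd_mul_right _ _
    · exact dvd_mul_right _ _
    · exact dvd_mul_left _ _
    · exact ⟨-u, by rw [hprod]; ring⟩
  · obtain ⟨a, b, hab⟩ := hcop
    have hab' : (a : AdjoinRoot q) * M + b * u = 1 := by exact_mod_cast congrArg Int.cast hab
    have hMM := Ideal.mul_mem_mul (natCast_mem_rootIdeal q M lam)
      (natCast_mem_rootIdeal q M (t - lam))
    have hconj := Ideal.mul_mem_mul (intCast_sub_root_mem_rootIdeal q M lam)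
      (intCast_sub_root_mem_rootIdeal q M (t - lam))
    rw [Ideal.span_singleton_le_iff_mem]
    convert Ideal.sub_mem _ (Ideal.mul_mem_left _ (a : AdjoinRoot q) hMM)
      (Ideal.mul_mem_left _ (b : AdjoinRoot q) hconj) using 1
    rw [hprod]
    linear_combination -(M : AdjoinRoot q) * hab'

theorem isUnit_rootIdeal (K : Type*) [CommRing K] [Algebra (AdjoinRoot q) K]
    [IsFractionRing (AdjoinRoot q) K] {M : ℕ} (hM : M ≠ 0) {lam u : ℤ}
    (hu : q.eval lam = M * u) (hcop : IsCoprime (M : ℤ) u) :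
    IsUnit (rootIdeal q M lam : FractionalIdeal (AdjoinRoot q)⁰ K) := by
  have hM' : (M : AdjoinRoot q) ∈ (AdjoinRoot q)⁰ := mod_cast
    intCast_mem_nonZeroDivisors (monic_of_eq_quadratic hq) (Int.natCast_ne_zero.mpr hM)
  exact FractionalIdeal.isUnit_coeIdeal_of_mul_eq_span_singleton hM'
    (rootIdeal_mul_rootIdeal_sub hq hu hcop)

theorem intCast_sub_root_mul_rootIdeal_le {p k : ℕ} (hk : 1 ≤ k) {lam u : ℤ}
    (hpt : (p : ℤ) ∣ t) (hplam : (p : ℤ) ∣ lam) (hu : q.eval lam = p ^ (k + 1) * u) :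
    Ideal.span {(lam : AdjoinRoot q) - root q} * rootIdeal q (p ^ k) lam ≤
      Ideal.span {(p : AdjoinRoot q)} * rootIdeal q (p ^ k) lam := by
  obtain ⟨j, rfl⟩ := Nat.exists_eq_add_of_le' hk
  obtain ⟨y, hy⟩ := dvd_sub (hplam.mul_left 2) hpt
  have hprod := intCast_sub_root_mul_intCast_sub_root hq lam
  have hy' : 2 * (lam : AdjoinRoot q) - t = p * y := by exact_mod_cast congrArg Int.cast hy
  rw [hu] at hprod
  push_cast at hprod
  rw [Ideal.span_singleton_mul_le_span_singleton_mul]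
  intro z hz
  obtain ⟨a, b, rfl⟩ := Ideal.mem_span_pair.mp hz
  refine ⟨a * p ^ j * ((lam : AdjoinRoot q) - root q) +
    b * (y * ((lam : AdjoinRoot q) - root q) - ((p ^ (j + 1) : ℕ) : AdjoinRoot q) * u), ?_, ?_⟩
  · have hgen := intCast_sub_root_mem_rootIdeal q (p ^ (j + 1)) lam
    exact add_mem (Ideal.mul_mem_left _ _ hgen) (Ideal.mul_mem_left _ _ (sub_mem
      (Ideal.mul_mem_left _ _ hgen) (Ideal.mul_mem_right _ _ (natCast_mem_rootIdeal q _ lam))))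
  · push_cast
    linear_combination b * hprod + b * ((lam : AdjoinRoot q) - root q) * hy'

theorem not_isUnit_rootIdeal (K : Type*) [CommRing K] [Algebra (AdjoinRoot q) K]
    [IsFractionRing (AdjoinRoot q) K] {p k : ℕ} (hp : p.Prime) (hk : 1 ≤ k)
    (hpt : (p : ℤ) ∣ t) (hpn : (p : ℤ) ∣ n) {lam : ℤ} (hdvd : (p : ℤ) ^ (k + 1) ∣ q.eval lam) :
    ¬IsUnit (rootIdeal q (p ^ k) lam : FractionalIdeal (AdjoinRoot q)⁰ K) := by
  intro hunit
  have hplam : (p : ℤ) ∣ lam := by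
    refine (Nat.prime_iff_prime_int.mp hp).dvd_of_dvd_pow (n := 2) ?_
    have heval : lam ^ 2 = q.eval lam + t * lam - n := by simp [hq]; ring
    rw [heval]
    exact dvd_sub (dvd_add ((dvd_pow_self _ (by omega)).trans hdvd) (hpt.mul_right _)) hpn
  obtain ⟨u, hu⟩ := hdvd
  have hle := FractionalIdeal.le_of_mul_le_mul_right_of_isUnit hunit
    (intCast_sub_root_mul_rootIdeal_le hq hk hpt hplam hu)
  rw [Ideal.span_singleton_le_span_singleton] at hle
  refine not_intCast_dvd_intCast_sub_root (monic_of_eq_quadratic hq)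
    (by rw [natDegree_of_eq_quadratic hq]; norm_num) ?_ lam (by exact_mod_cast hle)
  rw [Int.isUnit_iff_natAbs_eq, Int.natAbs_natCast]
  exact hp.ne_one

theorem bijOn_rootIdeal {p k : ℕ} (hp : p.Prime) (hk : 1 ≤ k) (hpt : (p : ℤ) ∣ t)
    (hpn : (p : ℤ) ∣ n) :
    Set.BijOn (rootIdeal q (p ^ k))
      {lam : ℤ | 0 ≤ lam ∧ lam < (p : ℤ) ^ k ∧ (p : ℤ) ^ k ∣ q.eval lam ∧
        ¬(p : ℤ) ^ (k + 1) ∣ q.eval lam}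
      {I : Ideal (AdjoinRoot q) |
        IsUnit (I : FractionalIdeal (AdjoinRoot q)⁰ (FractionRing (AdjoinRoot q))) ∧
        IsAddCyclic (AdjoinRoot q ⧸ I) ∧ Nat.card (AdjoinRoot q ⧸ I) = p ^ k} := by
  have hpk : p ^ k ≠ 0 := pow_ne_zero _ hp.ne_zero
  refine ⟨?_, ?_, ?_⟩
  · rintro lam ⟨-, -, ⟨u, hu⟩, hndvd⟩
    have hd : ((p ^ k : ℕ) : ℤ) ∣ q.eval lam := by push_cast; exact ⟨u, hu⟩
    have hcop : IsCoprime ((p ^ k : ℕ) : ℤ) u := by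
      push_cast
      refine ((Nat.prime_iff_prime_int.mp hp).coprime_iff_not_dvd.mpr ?_).pow_left
      rintro ⟨v, rfl⟩
      exact hndvd ⟨v, by rw [hu]; ring⟩
    exact ⟨isUnit_rootIdeal hq _ hpk (by push_cast; exact hu) hcop,
      isAddCyclic_quot_rootIdeal hd, natCard_quot_rootIdeal hd⟩
  · rintro l₁ ⟨hl₁, hl₁', hd, -⟩ l₂ ⟨hl₂, hl₂', -, -⟩ heq
    have hmem : ((l₂ - l₁ : ℤ) : AdjoinRoot q) ∈ rootIdeal q (p ^ k) l₁ := by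
      convert sub_mem (heq ▸ intCast_sub_root_mem_rootIdeal q (p ^ k) l₂)
        (intCast_sub_root_mem_rootIdeal q (p ^ k) l₁) using 1
      push_cast; ring
    have hdvd := (intCast_mem_rootIdeal_iff (by exact_mod_cast hd) _).mp hmem
    push_cast at hdvd
    have := Int.eq_zero_of_abs_lt_dvd hdvd (abs_sub_lt_iff.mpr ⟨by linarith, by linarith⟩)
    linarith
  · rintro I ⟨hunit, hcyc, hcard⟩
    obtain ⟨lam, h0, hlt, hdvd, rfl⟩ := exists_eq_rootIdeal_of_isAddCyclic hpk hcard
    push_cast at hlt hdvd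
    exact ⟨lam, ⟨h0, hlt, hdvd, fun h => not_isUnit_rootIdeal hq _ hp hk hpt hpn h hunit⟩, rfl⟩

end Quadratic

end AdjoinRoot

theorem ordPoly_eq_quadratic (DK : ℤ) (c : ℕ) :
    ∃ t n : ℤ, ordPoly DK c = X ^ 2 - C t * X + C n ∧ (c : ℤ) ∣ t ∧ (c : ℤ) ^ 2 ∣ n := by
  unfold ordPoly
  split_ifs
  · exact ⟨0, -((c : ℤ) ^ 2 * (DK / 4)), by simp [sub_eq_add_neg], dvd_zero _,
      (dvd_mul_right _ _).neg_right⟩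
  · exact ⟨c, (c : ℤ) ^ 2 * ((1 - DK) / 4), rfl, dvd_rfl, dvd_mul_right _ _⟩

theorem admissible_ideals_of_norm_p_pow_bijection_general
    (DK : ℤ) (c : ℕ) (p : ℕ) (hp : p.Prime) (hpc : p ∣ c) (k : ℕ) (hk : 1 ≤ k) :
    Set.BijOn
      (fun lam : ℤ =>
        Ideal.span {((p : QuadOrder DK c) ^ k),
          algebraMap ℤ (QuadOrder DK c) lam - AdjoinRoot.root (ordPoly DK c)})
      {lam : ℤ | 0 ≤ lam ∧ lam < (p : ℤ) ^ k ∧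
        ((p : ℤ) ^ k ∣ (ordPoly DK c).eval lam) ∧
        ¬ ((p : ℤ) ^ (k + 1) ∣ (ordPoly DK c).eval lam)}
      {I : Ideal (QuadOrder DK c) |
        IsUnit (I : FractionalIdeal (nonZeroDivisors (QuadOrder DK c))
          (FractionRing (QuadOrder DK c))) ∧
        IsAddCyclic ((QuadOrder DK c) ⧸ I) ∧
        Nat.card ((QuadOrder DK c) ⧸ I) = p ^ k} := by
  obtain ⟨t, n, hq, hct, hcn⟩ := ordPoly_eq_quadratic DK c
  have hpc' : (p : ℤ) ∣ c := Int.natCast_dvd_natCast.mpr hpc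
  have hspan (lam : ℤ) : Ideal.span {((p : QuadOrder DK c) ^ k),
      algebraMap ℤ (QuadOrder DK c) lam - AdjoinRoot.root (ordPoly DK c)} =
      AdjoinRoot.rootIdeal (ordPoly DK c) (p ^ k) lam := by
    rw [AdjoinRoot.rootIdeal, Nat.cast_pow, eq_intCast]
  simp only [hspan]
  exact AdjoinRoot.bijOn_rootIdeal hq hp hk (hpc'.trans hct)
    (hpc'.trans ((dvd_pow_self _ two_ne_zero).trans hcn))

/-- For `p ∣ c` prime and `k ≥ 1`, the map `λ ↦ (p^k, λ - α_𝒪)` is a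
bijection between residues `λ` modulo `p^k` (represented by `0 ≤ λ < p^k`) with
`P_𝒪(λ) ≡ 0 mod p^k` but `P_𝒪(λ) ≢ 0 mod p^{k+1}`, and the invertible ideals `I` of `𝒪`
with `𝒪/I` cyclic of order `p^k`. -/
theorem admissible_ideals_of_norm_p_pow_bijection
    (DK : ℤ) (hDK : DK < 0) (hfund : IsFundamentalDiscriminant DK)
    (c : ℕ) (hc : 0 < c) (p : ℕ) (hp : p.Prime) (hpc : p ∣ c) (k : ℕ) (hk : 1 ≤ k) :
    Set.BijOn
      (fun lam : ℤ =>
        Ideal.span {((p : QuadOrder DK c) ^ k),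
          algebraMap ℤ (QuadOrder DK c) lam - AdjoinRoot.root (ordPoly DK c)})
      {lam : ℤ | 0 ≤ lam ∧ lam < (p : ℤ) ^ k ∧
        ((p : ℤ) ^ k ∣ (ordPoly DK c).eval lam) ∧
        ¬ ((p : ℤ) ^ (k + 1) ∣ (ordPoly DK c).eval lam)}
      {I : Ideal (QuadOrder DK c) |
        IsUnit (I : FractionalIdeal (nonZeroDivisors (QuadOrder DK c))
          (FractionRing (QuadOrder DK c))) ∧
        IsAddCyclic ((QuadOrder DK c) ⧸ I) ∧
        Nat.card ((QuadOrder DK c) ⧸ I) = p ^ k} :=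
  admissible_ideals_of_norm_p_pow_bijection_general DK c p hp hpc k hk
end

section
/- Let $\mathcal{O}$ be an imaginary quadratic order, $N \geq 1$, and suppose the triple $(\mathcal{O}, \eta, [\mathfrak{a}])$ (with $\eta$ an invertible ideal of norm $N$ with $\mathcal{O}/\eta$ cyclic, and $[\mathfrak{a}] \in \mathrm{Pic}(\mathcal{O})$) defines a Heegner point on $X_0(N)$ whose image in $X_0(N)^* = X_0(N)/\mathcal{W}(N)$ is a rational point. Then $\mathrm{Pic}(\mathcal{O})$ is an elementary abelian 2-group of order dividing $2^{\omega(N)}$, where $\omega(N)$ is the number of distinct prime factors of $N$. -/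
/-!
Write `ω` for the root of `discPoly D`. Since `𝒪/η` is cyclic, `ω ≡ t (mod η)` for an integer
`t`, so `η = (N, ω - t)` and `η_Q = (Q, ω - t)` for `Q ∣ N`; for a Hall divisor `Q` moreover
`η_Q η_{N/Q} = η`. Rationality makes every class `b` equal to `[η_Q]` for a Hall divisor `Q` with
`η̄_Q η_{N/Q} = η`; cancelling the invertible `η_{N/Q}` gives `η̄_Q = η_Q`, which forces
`Q ∣ tr ω - 2t`. Writing `tr ω - 2t = Qk` and `f(t) = Qm` we get `(ω - t)² = Q (k (ω - t) - m)`,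
and invertibility of `η_Q` makes `Q` and `m` coprime, so `η_Q² = (Q)`. Hence `Pic(𝒪)` is
2-torsion, and `b ↦` (primes of `Q`) embeds it into the subsets of the primes of `N`.
-/

open Polynomial
open scoped Classical

/-- The minimal polynomial of the canonical generator of the quadratic order of
discriminant `D` (`D ≡ 0, 1 mod 4`): `X² - D/4` if `4 ∣ D`, else `X² - X + (1-D)/4`. -/
noncomputable def discPoly (D : ℤ) : Polynomial ℤ :=
  if 4 ∣ D then X ^ 2 - C (D / 4) else X ^ 2 - X + C ((1 - D) / 4)

/-- The quadratic order of discriminant `D`. -/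
noncomputable abbrev QOrd (D : ℤ) := AdjoinRoot (discPoly D)

/-- `Q` is a Hall divisor of `N`: `Q ∣ N` with `gcd(Q, N/Q) = 1`. -/
def HallDvd (Q N : ℕ) : Prop := Q ∣ N ∧ Nat.Coprime Q (N / Q)

/-- The norm-`Q` part `η_Q = η + Q·𝒪` of an ideal `η` whose quotient is cyclic of order
`N`, for `Q` a Hall divisor of `N`. -/
noncomputable def etaPart {D : ℤ} (η : Ideal (QOrd D)) (Q : ℕ) : Ideal (QOrd D) :=
  η ⊔ Ideal.span {(Q : QOrd D)}

/-- The class of an invertible ideal in the Picard (class) group of the order. -/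
noncomputable def idealClassOf {D : ℤ} [IsDomain (QOrd D)] (I : Ideal (QOrd D)) :
    ClassGroup (QOrd D) :=
  if h : IsUnit (I : FractionalIdeal (nonZeroDivisors (QOrd D)) (FractionRing (QOrd D)))
  then ClassGroup.mk (FractionRing (QOrd D)) h.unit else 1

open scoped nonZeroDivisors

namespace IsAddCyclic

variable {R : Type*} [Ring R] [IsAddCyclic R]

theorem intCast_surjective : Function.Surjective (Int.cast : ℤ → R) := by
  obtain ⟨g, hg⟩ := IsAddCyclic.exists_generator (α := R)
  obtain ⟨n, hn⟩ := AddSubgroup.mem_zmultiples_iff.mp (hg 1)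
  obtain ⟨m, hm⟩ := AddSubgroup.mem_zmultiples_iff.mp (hg (g * g))
  have hg_int : g = (m : R) := by
    calc g = (n • g) * g := by rw [hn, one_mul]
      _ = m • (n • g) := by rw [smul_mul_assoc, ← hm, smul_comm]
      _ = (m : R) := by rw [hn, zsmul_one]
  intro x
  obtain ⟨a, rfl⟩ := AddSubgroup.mem_zmultiples_iff.mp (hg x)
  exact ⟨a * m, by rw [hg_int, zsmul_eq_mul, Int.cast_mul]⟩

theorem ringChar_eq_natCard : ringChar R = Nat.card R := by
  have hbij : Function.Bijective (ZMod.castHom (dvd_refl (ringChar R)) R) := by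
    refine ⟨ZMod.castHom_injective R, fun x => ?_⟩
    obtain ⟨n, rfl⟩ := intCast_surjective x
    exact ⟨n, map_intCast _ n⟩
  rw [← Nat.card_congr (RingEquiv.ofBijective _ hbij).toEquiv, Nat.card_zmod]

end IsAddCyclic

namespace Ideal

variable {R : Type*} [CommRing R]

theorem intCast_mem_iff_of_isAddCyclic {I : Ideal R} [IsAddCyclic (R ⧸ I)] (n : ℤ) :
    (n : R) ∈ I ↔ (Nat.card (R ⧸ I) : ℤ) ∣ n := by
  have := ringChar.of_eq (IsAddCyclic.ringChar_eq_natCard (R := R ⧸ I))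
  rw [← Quotient.eq_zero_iff_mem, map_intCast, CharP.intCast_eq_zero_iff]

theorem exists_sub_intCast_mem_of_isAddCyclic {I : Ideal R} [IsAddCyclic (R ⧸ I)] (x : R) :
    ∃ n : ℤ, x - n ∈ I := by
  obtain ⟨n, hn⟩ := IsAddCyclic.intCast_surjective (Quotient.mk I x)
  exact ⟨n, by rw [← Quotient.eq_zero_iff_mem, map_sub, map_intCast, hn, sub_self]⟩

theorem sup_span_singleton_mul_sup_span_singleton {I : Ideal R} {a b : R} (hab : a * b ∈ I)
    (hcop : IsCoprime a b) : (I ⊔ span {a}) * (I ⊔ span {b}) = I := by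
  refine le_antisymm ?_ fun x hx => ?_
  · rw [sup_mul, mul_sup, mul_sup, span_singleton_mul_span_singleton]
    refine sup_le (sup_le mul_le_left mul_le_left) (sup_le mul_le_right ?_)
    rwa [span_le, Set.singleton_subset_iff]
  · obtain ⟨u, v, huv⟩ := hcop
    have hx' : x = u * (a * x) + v * (x * b) := by linear_combination (-x) * huv
    rw [hx']
    exact add_mem (mul_mem_left _ _ (mul_mem_mul (mem_sup_right (mem_span_singleton_self a))
      (mem_sup_left hx))) (mul_mem_left _ _ (mul_mem_mul (mem_sup_left hx)
      (mem_sup_right (mem_span_singleton_self b))))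

theorem span_pair_mul_self_eq_span_singleton {Q u k m : R} (hu : u * u = Q * (k * u - m))
    (hQm : IsCoprime Q m) : span {Q, u} * span {Q, u} = span {Q} := by
  have hQ : Q ∈ span {Q, u} := subset_span (by simp)
  have hu' : u ∈ span {Q, u} := subset_span (by simp)
  refine le_antisymm (mul_le.mpr fun r hr s hs => ?_) ?_
  · obtain ⟨a, b, rfl⟩ := mem_span_pair.mp hr
    obtain ⟨c, d, rfl⟩ := mem_span_pair.mp hs
    exact mem_span_singleton.mpr ⟨a * c * Q + (a * d + b * c) * u + b * d * (k * u - m),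
      by linear_combination (b * d) * hu⟩
  · obtain ⟨x, y, hxy⟩ := hQm
    rw [span_le, Set.singleton_subset_iff]
    have hQ' : Q = x * (Q * Q) + y * (k * (Q * u) - u * u) := by
      linear_combination (-Q) * hxy + y * hu
    have hmem : x * (Q * Q) + y * (k * (Q * u) - u * u) ∈ span {Q, u} * span {Q, u} :=
      add_mem (mul_mem_left _ _ (mul_mem_mul hQ hQ))
        (mul_mem_left _ _ (sub_mem (mul_mem_left _ _ (mul_mem_mul hQ hu')) (mul_mem_mul hu' hu')))
    rwa [← hQ'] at hmem

theorem le_of_mul_le_mul_right_of_isUnit {I J K : Ideal R}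
    (hJ : IsUnit (J : FractionalIdeal R⁰ (FractionRing R))) (h : I * J ≤ K * J) : I ≤ K := by
  rw [← FractionalIdeal.coeIdeal_le_coeIdeal (FractionRing R)]
  obtain ⟨v, hv⟩ := hJ
  have h' := mul_le_mul_left ((FractionalIdeal.coeIdeal_le_coeIdeal (FractionRing R)).mpr h)
    (↑v⁻¹ : FractionalIdeal R⁰ (FractionRing R))
  simpa [FractionalIdeal.coeIdeal_mul, ← hv, mul_assoc] using h'

theorem mem_span_singleton_of_isUnit_span_pair {p Q u k m : R}
    (hI : IsUnit ((span {Q, u} : Ideal R) : FractionalIdeal R⁰ (FractionRing R)))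
    (hu : u * u = Q * (k * u - m)) (hpQ : p ∣ Q) (hpm : p ∣ m) : u ∈ span {p} := by
  obtain ⟨q, rfl⟩ := hpQ
  obtain ⟨m', rfl⟩ := hpm
  have hsq : span {p * q, u} * span {p * q, u} ≤ span {p} * span {p * q, u} := by
    refine mul_le.mpr fun r hr s hs => ?_
    obtain ⟨a, b, rfl⟩ := mem_span_pair.mp hr
    obtain ⟨c, d, rfl⟩ := mem_span_pair.mp hs
    have hmem : a * c * q * (p * q) + (a * d + b * c) * q * u
        + b * d * (q * k * u - m' * (p * q)) ∈ span {p * q, u} :=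
      mem_span_pair.mpr ⟨a * c * q - b * d * m', (a * d + b * c) * q + b * d * q * k, by ring⟩
    convert mul_mem_mul (mem_span_singleton_self p) hmem using 1
    linear_combination (b * d) * hu
  exact le_of_mul_le_mul_right_of_isUnit hI hsq (subset_span (by simp))

end Ideal

namespace HallDvd

variable {Q N : ℕ}

theorem ne_zero (h : HallDvd Q N) : Q ≠ 0 := by
  rintro rfl
  simpa using h.2

theorem primeFactors_subset (h : HallDvd Q N) : Q.primeFactors ⊆ N.primeFactors := by
  rcases eq_or_ne N 0 with rfl | hN
  · simp [show Q = 1 by simpa using h.2]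
  · exact Nat.primeFactors_mono h.1 hN

theorem factorization_eq {p : ℕ} (h : HallDvd Q N) (hp : p ∈ Q.primeFactors) :
    Q.factorization p = N.factorization p := by
  rw [← Nat.mul_div_cancel' h.1, Nat.factorization_eq_of_coprime_left h.2]
  simpa using hp

theorem eq_of_primeFactors_eq {Q' : ℕ} (h : HallDvd Q N) (h' : HallDvd Q' N)
    (hQQ' : Q.primeFactors = Q'.primeFactors) : Q = Q' := by
  refine Nat.eq_of_factorization_eq h.ne_zero h'.ne_zero fun p => ?_
  by_cases hp : p ∈ Q.primeFactors
  · rw [h.factorization_eq hp, h'.factorization_eq (hQQ' ▸ hp)]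
  · have hp' : p ∉ Q'.primeFactors := hQQ' ▸ hp
    rw [← Nat.support_factorization, Finsupp.notMem_support_iff] at hp hp'
    rw [hp, hp']

end HallDvd

theorem Nat.card_dvd_two_pow_of_sq_eq_one {G : Type*} [Group G] [Finite G]
    (hG : ∀ x : G, x ^ 2 = 1) {n : ℕ} (hle : Nat.card G ≤ 2 ^ n) : Nat.card G ∣ 2 ^ n := by
  have : Fact (Nat.Prime 2) := ⟨Nat.prime_two⟩
  obtain ⟨k, hk⟩ := IsPGroup.exists_card_eq (p := 2) (G := G) fun x => ⟨1, hG x⟩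
  rw [hk] at hle ⊢
  exact pow_dvd_pow 2 ((Nat.pow_le_pow_iff_right (by norm_num)).mp hle)

def discTrace (D : ℤ) : ℤ := if 4 ∣ D then 0 else 1

def discNorm (D : ℤ) : ℤ := if 4 ∣ D then -(D / 4) else (1 - D) / 4

namespace QOrd

theorem discPoly_eq (D : ℤ) :
    discPoly D = C 1 * X ^ 2 + C (-discTrace D) * X + C (discNorm D) := by
  unfold discPoly discTrace discNorm
  split <;> simp <;> ring

theorem natDegree_discPoly (D : ℤ) : (discPoly D).natDegree = 2 := by
  rw [discPoly_eq]
  exact natDegree_quadratic one_ne_zero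

theorem monic_discPoly (D : ℤ) : (discPoly D).Monic := by
  rw [Monic, discPoly_eq]
  exact leadingCoeff_quadratic one_ne_zero

theorem eval_discPoly (D t : ℤ) : (discPoly D).eval t = t ^ 2 - discTrace D * t + discNorm D := by
  rw [discPoly_eq]
  simp only [eval_add, eval_mul, eval_C, eval_pow, eval_X]
  ring

variable {D : ℤ}

theorem root_mul_self : AdjoinRoot.root (discPoly D) * AdjoinRoot.root (discPoly D) =
    discTrace D * AdjoinRoot.root (discPoly D) - discNorm D := by
  have h : AdjoinRoot.mk (discPoly D)
      (C 1 * X ^ 2 + C (-discTrace D) * X + C (discNorm D)) = 0 := by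
    rw [← discPoly_eq]
    exact AdjoinRoot.mk_self
  simp only [map_add, map_mul, map_pow, AdjoinRoot.mk_X, eq_intCast, map_intCast, map_one,
    map_neg] at h
  linear_combination h

theorem exists_eq_intCast_add_intCast_mul_root (x : QOrd D) :
    ∃ a b : ℤ, x = a + b * AdjoinRoot.root (discPoly D) := by
  obtain ⟨p, rfl⟩ := AdjoinRoot.mk_surjective x
  have hdeg : (p %ₘ discPoly D).degree ≤ 1 := by
    have h := degree_modByMonic_lt p (monic_discPoly D)
    rw [degree_eq_natDegree (monic_discPoly D).ne_zero, natDegree_discPoly] at h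
    exact Order.le_of_lt_succ h
  refine ⟨(p %ₘ discPoly D).coeff 0, (p %ₘ discPoly D).coeff 1, ?_⟩
  have hmod := AdjoinRoot.mk_leftInverse (monic_discPoly D) (AdjoinRoot.mk (discPoly D) p)
  rw [AdjoinRoot.modByMonicHom_mk, eq_X_add_C_of_degree_le_one hdeg] at hmod
  rw [← hmod]
  simp only [map_add, map_mul, AdjoinRoot.mk_X, eq_intCast, map_intCast]
  ring

theorem intCast_add_intCast_mul_root_eq_zero_iff {a b : ℤ} :
    (a : QOrd D) + b * AdjoinRoot.root (discPoly D) = 0 ↔ a = 0 ∧ b = 0 := by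
  refine ⟨fun h => ?_, fun ⟨ha, hb⟩ => by simp [ha, hb]⟩
  have hmk : AdjoinRoot.mk (discPoly D) (C b * X + C a) = 0 := by
    rw [map_add, map_mul, AdjoinRoot.mk_C, AdjoinRoot.mk_C, AdjoinRoot.mk_X, eq_intCast,
      eq_intCast, add_comm, h]
  have hzero : C b * X + C a = 0 := by
    refine eq_zero_of_dvd_of_degree_lt (AdjoinRoot.mk_eq_zero.mp hmk) ?_
    rw [degree_eq_natDegree (monic_discPoly D).ne_zero, natDegree_discPoly]
    exact degree_linear_le.trans_lt (by decide)
  have h0 := congrArg (coeff · 0) hzero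
  have h1 := congrArg (coeff · 1) hzero
  simp only [coeff_add, coeff_C_mul_X, coeff_C, coeff_zero] at h0 h1
  simpa using And.intro h0 h1

theorem isUnit_of_root_sub_intCast_mem_span {t z : ℤ}
    (h : AdjoinRoot.root (discPoly D) - t ∈ Ideal.span {(z : QOrd D)}) : IsUnit z := by
  obtain ⟨c, hc⟩ := Ideal.mem_span_singleton'.mp h
  obtain ⟨a, b, rfl⟩ := exists_eq_intCast_add_intCast_mul_root c
  have hlin : ((-t - a * z : ℤ) : QOrd D) + ((1 - b * z : ℤ) : QOrd D) *
      AdjoinRoot.root (discPoly D) = 0 := by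
    push_cast
    linear_combination -hc
  have hb := (intCast_add_intCast_mul_root_eq_zero_iff.mp hlin).2
  exact IsUnit.of_mul_eq_one_right b (by linarith)

theorem intCast_ne_zero {n : ℤ} (hn : n ≠ 0) : (n : QOrd D) ≠ 0 := fun h =>
  hn (intCast_add_intCast_mul_root_eq_zero_iff.mp
    (by simp [h] : (n : QOrd D) + (0 : ℤ) * AdjoinRoot.root (discPoly D) = 0)).1

theorem intCast_eval_mem_of_root_sub_mem {I : Ideal (QOrd D)} {t : ℤ}
    (ht : AdjoinRoot.root (discPoly D) - t ∈ I) :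
    (((discPoly D).eval t : ℤ) : QOrd D) ∈ I := by
  have hdvd := sub_dvd_eval_sub (t : QOrd D) (AdjoinRoot.root (discPoly D))
    ((discPoly D).map (AdjoinRoot.of (discPoly D)))
  rw [eval_intCast_map, eval_map, AdjoinRoot.eval₂_root, sub_zero, eq_intCast] at hdvd
  exact Ideal.mem_of_dvd _ (by rwa [← neg_sub, neg_dvd]) ht

theorem dvd_of_intCast_mem_span_pair {Q : ℕ} {t n : ℤ} (hQt : (Q : ℤ) ∣ (discPoly D).eval t)
    (hn : (n : QOrd D) ∈ Ideal.span {(Q : QOrd D), AdjoinRoot.root (discPoly D) - t}) :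
    (Q : ℤ) ∣ n := by
  have hroot : (discPoly D).eval₂ (Int.castRingHom (ZMod Q)) (t : ZMod Q) = 0 := by
    rw [← eq_intCast (Int.castRingHom (ZMod Q)) t, eval₂_at_apply, eq_intCast,
      ZMod.intCast_zmod_eq_zero_iff_dvd]
    exact hQt
  set ψ := AdjoinRoot.lift (Int.castRingHom (ZMod Q)) (t : ZMod Q) hroot
  have hker : Ideal.span {(Q : QOrd D), AdjoinRoot.root (discPoly D) - t} ≤ RingHom.ker ψ := by
    rw [Ideal.span_le, Set.insert_subset_iff, Set.singleton_subset_iff]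
    simp [ψ, RingHom.mem_ker, AdjoinRoot.lift_root]
  have hψn := hker hn
  rwa [RingHom.mem_ker, map_intCast, ZMod.intCast_zmod_eq_zero_iff_dvd] at hψn

theorem dvd_discTrace_sub_two_mul (conj : QOrd D ≃+* QOrd D)
    (hconj : conj (AdjoinRoot.root (discPoly D)) =
      algebraMap ℤ (QOrd D) (discTrace D) - AdjoinRoot.root (discPoly D))
    {Q : ℕ} {t : ℤ} (hQt : (Q : ℤ) ∣ (discPoly D).eval t)
    (hfix : Ideal.map (conj : QOrd D →+* QOrd D)
      (Ideal.span {(Q : QOrd D), AdjoinRoot.root (discPoly D) - t}) =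
      Ideal.span {(Q : QOrd D), AdjoinRoot.root (discPoly D) - t}) :
    (Q : ℤ) ∣ discTrace D - 2 * t := by
  refine dvd_of_intCast_mem_span_pair hQt ?_
  have hu : AdjoinRoot.root (discPoly D) - t ∈
      Ideal.span {(Q : QOrd D), AdjoinRoot.root (discPoly D) - t} := Ideal.subset_span (by simp)
  have hconj_mem := hfix ▸ Ideal.mem_map_of_mem (conj : QOrd D →+* QOrd D) hu
  rw [RingHom.coe_coe, map_sub, map_intCast, hconj, eq_intCast] at hconj_mem
  convert add_mem hconj_mem hu using 1
  push_cast
  ring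

section Level

variable {η : Ideal (QOrd D)} [IsAddCyclic (QOrd D ⧸ η)] {N : ℕ}

theorem eq_span_natCast_root_sub (hcard : Nat.card (QOrd D ⧸ η) = N) {t : ℤ}
    (ht : AdjoinRoot.root (discPoly D) - t ∈ η) :
    η = Ideal.span {(N : QOrd D), AdjoinRoot.root (discPoly D) - t} := by
  refine le_antisymm (fun x hx => ?_) ?_
  · obtain ⟨a, b, rfl⟩ := exists_eq_intCast_add_intCast_mul_root x
    have hab : ((a + b * t : ℤ) : QOrd D) ∈ η := by
      convert sub_mem hx (η.mul_mem_left (b : QOrd D) ht) using 1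
      push_cast
      ring
    obtain ⟨e, he⟩ := (Ideal.intCast_mem_iff_of_isAddCyclic _).mp hab
    rw [hcard] at he
    have he' := congrArg (Int.cast : ℤ → QOrd D) he
    push_cast at he'
    exact Ideal.mem_span_pair.mpr ⟨e, b, by linear_combination -he'⟩
  · have hN := (Ideal.intCast_mem_iff_of_isAddCyclic (I := η) (N : ℤ)).mpr (by rw [hcard])
    rw [Ideal.span_le, Set.insert_subset_iff, Set.singleton_subset_iff]
    exact ⟨by exact_mod_cast hN, ht⟩

theorem etaPart_eq_span_pair (hcard : Nat.card (QOrd D ⧸ η) = N) {t : ℤ}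
    (ht : AdjoinRoot.root (discPoly D) - t ∈ η) {Q : ℕ} (hQ : Q ∣ N) :
    etaPart η Q = Ideal.span {(Q : QOrd D), AdjoinRoot.root (discPoly D) - t} := by
  have hQ' : (Q : QOrd D) ∈ Ideal.span {(Q : QOrd D), AdjoinRoot.root (discPoly D) - t} :=
    Ideal.subset_span (by simp)
  apply le_antisymm
  · rw [etaPart, eq_span_natCast_root_sub hcard ht, sup_le_iff, Ideal.span_le, Ideal.span_le,
      Set.insert_subset_iff, Set.singleton_subset_iff, Set.singleton_subset_iff]
    obtain ⟨c, rfl⟩ := hQ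
    refine ⟨⟨?_, Ideal.subset_span (by simp)⟩, hQ'⟩
    simpa using Ideal.mul_mem_right (c : QOrd D) _ hQ'
  · rw [Ideal.span_le, Set.insert_subset_iff, Set.singleton_subset_iff]
    exact ⟨Ideal.mem_sup_right (Ideal.mem_span_singleton_self _), Ideal.mem_sup_left ht⟩

end Level

section IdealClass

variable [IsDomain (QOrd D)]

theorem idealClassOf_mul {I J : Ideal (QOrd D)}
    (hI : IsUnit (I : FractionalIdeal (QOrd D)⁰ (FractionRing (QOrd D))))
    (hJ : IsUnit (J : FractionalIdeal (QOrd D)⁰ (FractionRing (QOrd D)))) :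
    idealClassOf (I * J) = idealClassOf I * idealClassOf J := by
  have hIJ : IsUnit ((I * J : Ideal (QOrd D)) :
      FractionalIdeal (QOrd D)⁰ (FractionRing (QOrd D))) :=
    (FractionalIdeal.coeIdeal_mul (P := FractionRing (QOrd D)) I J) ▸ hI.mul hJ
  rw [idealClassOf, idealClassOf, idealClassOf, dif_pos hIJ, dif_pos hI, dif_pos hJ, ← map_mul]
  congr 1
  ext
  simp [FractionalIdeal.coeIdeal_mul]

theorem idealClassOf_span_singleton {x : QOrd D} (hx : x ≠ 0) :
    idealClassOf (Ideal.span {x}) = 1 := by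
  set y := algebraMap (QOrd D) (FractionRing (QOrd D)) x
  have hy : y ≠ 0 := (map_ne_zero_iff _ (IsFractionRing.injective _ _)).mpr hx
  have hcoe :=
    FractionalIdeal.coeIdeal_span_singleton (S := (QOrd D)⁰) (P := FractionRing (QOrd D)) x
  have hunit : IsUnit ((Ideal.span {x} : Ideal (QOrd D)) :
      FractionalIdeal (QOrd D)⁰ (FractionRing (QOrd D))) := by
    rw [hcoe]
    refine IsUnit.of_mul_eq_one (FractionalIdeal.spanSingleton _ y⁻¹) ?_
    rw [FractionalIdeal.spanSingleton_mul_spanSingleton, mul_inv_cancel₀ hy,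
      FractionalIdeal.spanSingleton_one]
  rw [idealClassOf, dif_pos hunit, ClassGroup.mk_eq_one_iff]
  exact ⟨⟨y, by rw [IsUnit.unit_spec, hcoe, FractionalIdeal.coe_spanSingleton]⟩⟩

theorem idealClassOf_span_pair_sq_eq_one (conj : QOrd D ≃+* QOrd D)
    (hconj : conj (AdjoinRoot.root (discPoly D)) =
      algebraMap ℤ (QOrd D) (discTrace D) - AdjoinRoot.root (discPoly D))
    {Q : ℕ} (hQ : Q ≠ 0) {t : ℤ} (hQt : (Q : ℤ) ∣ (discPoly D).eval t)
    (hI : IsUnit ((Ideal.span {(Q : QOrd D), AdjoinRoot.root (discPoly D) - t} :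
      Ideal (QOrd D)) : FractionalIdeal (QOrd D)⁰ (FractionRing (QOrd D))))
    (hfix : Ideal.map (conj : QOrd D →+* QOrd D)
      (Ideal.span {(Q : QOrd D), AdjoinRoot.root (discPoly D) - t}) =
      Ideal.span {(Q : QOrd D), AdjoinRoot.root (discPoly D) - t}) :
    idealClassOf (Ideal.span {(Q : QOrd D), AdjoinRoot.root (discPoly D) - t}) ^ 2 = 1 := by
  obtain ⟨k, hk⟩ := dvd_discTrace_sub_two_mul conj hconj hQt hfix
  obtain ⟨m, hm⟩ := hQt
  have hu : (AdjoinRoot.root (discPoly D) - t) * (AdjoinRoot.root (discPoly D) - t) =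
      (Q : QOrd D) * (k * (AdjoinRoot.root (discPoly D) - t) - m) := by
    have hk' := congrArg (Int.cast : ℤ → QOrd D) hk
    have hm' := congrArg (Int.cast : ℤ → QOrd D) hm
    rw [eval_discPoly] at hm'
    push_cast at hk' hm'
    linear_combination root_mul_self + (AdjoinRoot.root (discPoly D) - t) * hk' - hm'
  -- a prime `z ∣ Q, m` would give `(Q, ω - t)² ⊆ z (Q, ω - t)`, hence `ω - t ∈ (z)`
  have hQm : IsCoprime (Q : ℤ) m := by
    refine isCoprime_of_prime_dvd (by simp [hQ]) fun z hz hzQ hzm => hz.not_isUnit ?_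
    refine isUnit_of_root_sub_intCast_mem_span
      (Ideal.mem_span_singleton_of_isUnit_span_pair hI hu ?_ (map_dvd (Int.castRingHom _) hzm))
    exact_mod_cast map_dvd (Int.castRingHom (QOrd D)) hzQ
  have hQm' : IsCoprime (Q : QOrd D) m := by
    exact_mod_cast hQm.map (Int.castRingHom (QOrd D))
  rw [sq, ← idealClassOf_mul hI hI, Ideal.span_pair_mul_self_eq_span_singleton hu hQm',
    idealClassOf_span_singleton (by exact_mod_cast intCast_ne_zero (Int.natCast_ne_zero.mpr hQ))]

theorem idealClassOf_etaPart_sq_eq_one (conj : QOrd D ≃+* QOrd D)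
    (hconj : conj (AdjoinRoot.root (discPoly D)) =
      algebraMap ℤ (QOrd D) (discTrace D) - AdjoinRoot.root (discPoly D))
    {η : Ideal (QOrd D)} [IsAddCyclic (QOrd D ⧸ η)] {N : ℕ}
    (hη : IsUnit (η : FractionalIdeal (QOrd D)⁰ (FractionRing (QOrd D))))
    (hcard : Nat.card (QOrd D ⧸ η) = N) {Q : ℕ} (hQ : HallDvd Q N)
    (heq : Ideal.map (conj : QOrd D →+* QOrd D) (etaPart η Q) * etaPart η (N / Q) = η) :
    idealClassOf (etaPart η Q) ^ 2 = 1 := by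
  obtain ⟨t, ht⟩ :=
    Ideal.exists_sub_intCast_mem_of_isAddCyclic (I := η) (AdjoinRoot.root (discPoly D))
  have hN : (N : QOrd D) ∈ η := by
    rw [eq_span_natCast_root_sub hcard ht]
    exact Ideal.subset_span (by simp)
  have hprod : etaPart η Q * etaPart η (N / Q) = η := by
    refine Ideal.sup_span_singleton_mul_sup_span_singleton ?_ ?_
    · rwa [← Nat.cast_mul, Nat.mul_div_cancel' hQ.1]
    · exact_mod_cast (Nat.isCoprime_iff_coprime.mpr hQ.2).map (Int.castRingHom (QOrd D))
  rw [← hprod, FractionalIdeal.coeIdeal_mul] at hη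
  have hfix : Ideal.map (conj : QOrd D →+* QOrd D) (etaPart η Q) = etaPart η Q := by
    refine FractionalIdeal.coeIdeal_injective
      ((isUnit_of_mul_isUnit_right hη).mul_right_cancel ?_)
    rw [← FractionalIdeal.coeIdeal_mul, ← FractionalIdeal.coeIdeal_mul, heq, hprod]
  have hQt : (Q : ℤ) ∣ (discPoly D).eval t := (Int.natCast_dvd_natCast.mpr hQ.1).trans <|
    hcard ▸ (Ideal.intCast_mem_iff_of_isAddCyclic _).mp (intCast_eval_mem_of_root_sub_mem ht)
  have hQunit := isUnit_of_mul_isUnit_left hη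
  rw [etaPart_eq_span_pair hcard ht hQ.1] at hQunit hfix ⊢
  exact idealClassOf_span_pair_sq_eq_one conj hconj hQ.ne_zero hQt hQunit hfix

end IdealClass

end QOrd

theorem pic_two_torsion_of_rational_heegner_point_general
    (D : ℤ)
    [IsDomain (QOrd D)]
    (conj : QOrd D ≃+* QOrd D)
    (hconj : conj (AdjoinRoot.root (discPoly D)) =
      algebraMap ℤ (QOrd D) (if 4 ∣ D then 0 else 1) - AdjoinRoot.root (discPoly D))
    (N : ℕ)
    (η : Ideal (QOrd D))
    (hηinv : IsUnit (η : FractionalIdeal (nonZeroDivisors (QOrd D)) (FractionRing (QOrd D))))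
    (hηcyc : IsAddCyclic ((QOrd D) ⧸ η)) (hηcard : Nat.card ((QOrd D) ⧸ η) = N)
    (a : ClassGroup (QOrd D))
    (hrat : ∀ b : ClassGroup (QOrd D),
      (∃ Q : ℕ, HallDvd Q N ∧
        Ideal.map (conj : QOrd D →+* QOrd D) (etaPart η Q) * etaPart η (N / Q) = η ∧
        a * b⁻¹ = a * (idealClassOf (etaPart η Q))⁻¹) ∧
      (∃ Q : ℕ, HallDvd Q N ∧
        Ideal.map (conj : QOrd D →+* QOrd D) (etaPart η Q) * etaPart η (N / Q) =
          Ideal.map (conj : QOrd D →+* QOrd D) η ∧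
        a⁻¹ * b⁻¹ = a * (idealClassOf (etaPart η Q))⁻¹)) :
    (∀ x : ClassGroup (QOrd D), x ^ 2 = 1) ∧
      Nat.card (ClassGroup (QOrd D)) ∣ 2 ^ N.primeFactors.card := by
  have hclass : ∀ b : ClassGroup (QOrd D), ∃ Q : ℕ, HallDvd Q N ∧
      Ideal.map (conj : QOrd D →+* QOrd D) (etaPart η Q) * etaPart η (N / Q) = η ∧
      b = idealClassOf (etaPart η Q) := fun b => by
    obtain ⟨Q, hQ, heq, hb⟩ := (hrat b).1
    exact ⟨Q, hQ, heq, inv_injective (mul_left_cancel hb)⟩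
  choose Q hQ heq hbQ using hclass
  have hsq (b : ClassGroup (QOrd D)) : b ^ 2 = 1 := hbQ b ▸
    QOrd.idealClassOf_etaPart_sq_eq_one conj hconj hηinv hηcard (hQ b) (heq b)
  let F (b : ClassGroup (QOrd D)) : N.primeFactors.powerset :=
    ⟨(Q b).primeFactors, Finset.mem_powerset.mpr (hQ b).primeFactors_subset⟩
  have hF : Function.Injective F := fun b b' h => by
    rw [hbQ b, hbQ b', (hQ b).eq_of_primeFactors_eq (hQ b') (congrArg Subtype.val h)]
  have : Finite (ClassGroup (QOrd D)) := Finite.of_injective F hF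
  refine ⟨hsq, Nat.card_dvd_two_pow_of_sq_eq_one hsq ?_⟩
  calc Nat.card (ClassGroup (QOrd D)) ≤ Nat.card N.primeFactors.powerset :=
        Nat.card_le_card_of_injective F hF
    _ = 2 ^ N.primeFactors.card := by rw [Nat.card_eq_finsetCard, Finset.card_powerset]

/-- Suppose the Heegner point `(𝒪, η, [𝔞])` of level `N` (with `𝒪` the
imaginary quadratic order of discriminant `D`, `η` an invertible ideal with `𝒪/η ≅ ℤ/N`
cyclic, `[𝔞] ∈ Pic(𝒪)`) maps to a rational point of `X₀(N)* = X₀(N)/𝒲(N)`, i.e. the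
Galois orbit of the triple (computed via the explicit formulas: `σ(𝔟)` sends
`(η, [𝔞]) ↦ (η, [𝔞𝔟⁻¹])` and `τσ(𝔟)` sends `(η, [𝔞]) ↦ (η̄, [𝔞⁻¹𝔟⁻¹])`) is contained in
its Atkin–Lehner orbit (`w_Q(η, [𝔞]) = (η̄_Q·η_{N/Q}, [𝔞·η_Q⁻¹])` for Hall divisors
`Q ∥ N`).  Then `Pic(𝒪)` is an elementary abelian 2-group of order dividing `2^{ω(N)}`. -/
theorem pic_two_torsion_of_rational_heegner_point
    (D : ℤ) (hD : D < 0) (hD4 : D % 4 = 0 ∨ D % 4 = 1)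
    [IsDomain (QOrd D)]
    (conj : QOrd D ≃+* QOrd D)
    (hconj : conj (AdjoinRoot.root (discPoly D)) =
      algebraMap ℤ (QOrd D) (if 4 ∣ D then 0 else 1) - AdjoinRoot.root (discPoly D))
    (N : ℕ) (hN : 0 < N)
    (η : Ideal (QOrd D))
    (hηinv : IsUnit (η : FractionalIdeal (nonZeroDivisors (QOrd D)) (FractionRing (QOrd D))))
    (hηcyc : IsAddCyclic ((QOrd D) ⧸ η)) (hηcard : Nat.card ((QOrd D) ⧸ η) = N)
    (a : ClassGroup (QOrd D))
    (hrat : ∀ b : ClassGroup (QOrd D),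
      (∃ Q : ℕ, HallDvd Q N ∧
        Ideal.map (conj : QOrd D →+* QOrd D) (etaPart η Q) * etaPart η (N / Q) = η ∧
        a * b⁻¹ = a * (idealClassOf (etaPart η Q))⁻¹) ∧
      (∃ Q : ℕ, HallDvd Q N ∧
        Ideal.map (conj : QOrd D →+* QOrd D) (etaPart η Q) * etaPart η (N / Q) =
          Ideal.map (conj : QOrd D →+* QOrd D) η ∧
        a⁻¹ * b⁻¹ = a * (idealClassOf (etaPart η Q))⁻¹)) :
    (∀ x : ClassGroup (QOrd D), x ^ 2 = 1) ∧
      Nat.card (ClassGroup (QOrd D)) ∣ 2 ^ N.primeFactors.card :=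
  pic_two_torsion_of_rational_heegner_point_general D conj hconj N η hηinv hηcyc hηcard a hrat
end

section
/- Let $N \geq 1$ and let $\mathcal{W}(N) \cong (\mathbb{Z}/2\mathbb{Z})^{\omega(N)}$ be the Atkin–Lehner group acting on $X_0(N)$. For any non-cuspidal point $P^* \in X_0(N)^*(\mathbb{Q})$ and any point $P \in X_0(N)(\overline{\mathbb{Q}})$ mapping to $P^*$, the field of definition of $P$ is a polyquadratic field of degree at most $2^{\omega(N)}$ over $\mathbb{Q}$, i.e., a Galois extension with Galois group isomorphic to $(\mathbb{Z}/2\mathbb{Z})^{r'}$ for some $r' \leq \omega(N)$. -/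
/-- Let `N ≥ 1` and let `W ≅ (ℤ/2)^{ω(N)}` be the Atkin–Lehner group
acting on the points `X` of `X₀(N)` over `ℚ̄`, commuting with the action of the absolute
Galois group `Γ`.  If the Galois orbit of a (non-cuspidal) point `P` is contained in its
`W`-orbit (i.e. `P` maps to a rational point of `X₀(N)*`), then the field of definition of
`P` is a polyquadratic field of degree at most `2^{ω(N)}`: the stabilizer `H` of `P` in `Γ`
is a normal subgroup, every square lies in `H`, and `[Γ : H] = 2^{r'}` for some
`r' ≤ ω(N)`. -/
theorem field_of_definition_polyquadratic
    (N : ℕ) (hN : 0 < N)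
    (W : Type*) [Group W] [Finite W]
    (hW2 : ∀ w : W, w ^ 2 = 1) (hWcard : Nat.card W = 2 ^ N.primeFactors.card)
    (Γ : Type*) [Group Γ]
    (X : Type*) [MulAction W X] [MulAction Γ X]
    (hcomm : ∀ (σ : Γ) (w : W) (x : X), σ • (w • x) = w • (σ • x))
    (P : X) (hP : ∀ σ : Γ, ∃ w : W, σ • P = w • P) :
    (MulAction.stabilizer Γ P).Normal ∧
      (∀ σ : Γ, σ ^ 2 ∈ MulAction.stabilizer Γ P) ∧
      ∃ r' : ℕ, r' ≤ N.primeFactors.card ∧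
        (MulAction.stabilizer Γ P).index = 2 ^ r' := by
  set H := MulAction.stabilizer Γ P with hH
  -- normality
  have hnormal : H.Normal := by
    constructor
    intro σ hσ τ
    have hσ' : σ • P = P := hσ
    obtain ⟨w, hw⟩ := hP τ⁻¹
    have hwP : τ • (w • P) = P := by
      rw [← hw, smul_smul, mul_inv_cancel, one_smul]
    show (τ * σ * τ⁻¹) • P = P
    rw [mul_smul, mul_smul, hw, hcomm, hσ', hwP]
  have hsq : ∀ σ : Γ, σ ^ 2 ∈ H := by
    intro σ
    obtain ⟨w, hw⟩ := hP σ
    show σ ^ 2 • P = P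
    have : σ • (w • P) = w • (w • P) := by rw [hcomm, hw]
    calc σ ^ 2 • P = σ • σ • P := by rw [pow_two, mul_smul]
      _ = w • w • P := by rw [hw, this]
      _ = (w ^ 2) • P := by rw [pow_two, mul_smul]
      _ = P := by rw [hW2, one_smul]
  refine ⟨hnormal, hsq, ?_⟩
  -- the Γ-orbit of P is contained in the W-orbit of P
  have horb : MulAction.orbit Γ P ⊆ MulAction.orbit W P := by
    rintro x ⟨σ, rfl⟩
    obtain ⟨w, hw⟩ := hP σ
    exact ⟨w, hw.symm⟩
  have hfinW : Finite (MulAction.orbit W P) := Set.Finite.to_subtype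
    ((Set.finite_range _))
  have hfinΓ : Finite (MulAction.orbit Γ P) :=
    Finite.Set.subset _ horb
  have e := MulAction.orbitEquivQuotientStabilizer Γ P
  have hfinQ : Finite (Γ ⧸ H) := Finite.of_equiv _ e
  -- the quotient is a finite 2-group
  have h2 : IsPGroup 2 (Γ ⧸ H) := by
    intro g
    refine ⟨1, ?_⟩
    obtain ⟨σ, rfl⟩ := QuotientGroup.mk_surjective g
    rw [pow_one]
    rw [← QuotientGroup.mk_pow, QuotientGroup.eq_one_iff]
    exact hsq σ
  obtain ⟨r', hr'⟩ := IsPGroup.iff_card.mp h2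
  have hindex : H.index = 2 ^ r' := by
    rw [Subgroup.index, hr']
  -- card bound
  have hle1 : Nat.card (Γ ⧸ H) = Nat.card (MulAction.orbit Γ P) :=
    (Nat.card_congr e).symm
  have hle2 : Nat.card (MulAction.orbit Γ P) ≤ Nat.card (MulAction.orbit W P) :=
    Nat.card_le_card_of_injective (Set.inclusion horb) (Set.inclusion_injective horb)
  have hle3 : Nat.card (MulAction.orbit W P) ≤ Nat.card W := by
    have : Function.Surjective (fun w : W => (⟨w • P, w, rfl⟩ : MulAction.orbit W P)) := by
      rintro ⟨x, w, rfl⟩; exact ⟨w, rfl⟩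
    exact Nat.card_le_card_of_surjective _ this
  have : (2 : ℕ) ^ r' ≤ 2 ^ N.primeFactors.card := by
    rw [← hr', ← hWcard]
    exact hle1 ▸ le_trans hle2 hle3
  exact ⟨r', (Nat.pow_le_pow_iff_right one_lt_two).mp this, hindex⟩
end

section
/- Let $\mathcal{E}_0(K)$ denote the elliptic curves over $\mathbb{C}$ with complex multiplication by orders in an imaginary quadratic field $K$, and let $\ell$ be a prime. Suppose $E$ has CM by the order of conductor $f$, $E'$ has CM by the order of conductor $f'$, and there is an $\ell$-isogeny $E \to E'$. Then $f' = f$, $f' = \ell f$, or $f' = f/\ell$. -/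
/-- The generator `ω_K = (D_K + √D_K)/2` of the maximal order `𝒪_K = ℤ[ω_K]` of the
imaginary quadratic field of (fundamental) discriminant `D_K < 0`, embedded in `ℂ`. -/
noncomputable def omegaK (DK : ℤ) : ℂ :=
  ((DK : ℂ) + Complex.I * (Real.sqrt (-DK) : ℂ)) / 2

/-- The multiplier ring `{z ∈ ℂ | z·Λ ⊆ Λ}` of a lattice `Λ ⊆ ℂ`, i.e. the endomorphism
ring of the complex torus `ℂ/Λ`. -/
def endoSet (Λ : AddSubgroup ℂ) : Set ℂ := {z | ∀ w ∈ Λ, z * w ∈ Λ}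

/-- The order `ℤ + f·𝒪_K` of conductor `f` in the imaginary quadratic field of
discriminant `D_K`, as a subset of `ℂ`. -/
def orderSet (DK : ℤ) (f : ℕ) : Set ℂ :=
  {z | ∃ a b : ℤ, z = (a : ℂ) + (b : ℂ) * ((f : ℂ) * omegaK DK)}

/-- `Λ` is a lattice in `ℂ`. -/
def IsComplexLattice (Λ : AddSubgroup ℂ) : Prop :=
  ∃ ω₁ ω₂ : ℂ, LinearIndependent ℝ ![ω₁, ω₂] ∧ Λ = AddSubgroup.closure {ω₁, ω₂}

/-- Extracting a divisibility from membership in an order. -/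
lemma dvd_of_mem_orderSet (DK : ℤ) (hDK : DK < 0) (g g' : ℕ) (ℓ : ℕ)
    (h : (ℓ : ℂ) * ((g : ℂ) * omegaK DK) ∈ orderSet DK g') : g' ∣ ℓ * g := by
  obtain ⟨a, b, hab⟩ := h
  have hIm : (omegaK DK).im = Real.sqrt (-DK) / 2 := by
    simp [omegaK, Complex.div_im]
  have hpos : (0 : ℝ) < Real.sqrt (-DK) := Real.sqrt_pos.mpr (by exact_mod_cast neg_pos.mpr hDK)
  have h2 := congrArg Complex.im hab
  simp only [Complex.mul_im, Complex.add_im, Complex.intCast_im, Complex.natCast_im,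
    Complex.intCast_re, Complex.natCast_re, zero_mul, mul_zero, add_zero, zero_add] at h2
  -- h2 : ℓ * (g * ω.im) = b * (g' * ω.im)  (roughly)
  have h3 : ((ℓ : ℝ) * g) * (omegaK DK).im = ((b : ℝ) * g') * (omegaK DK).im := by
    ring_nf at h2 ⊢; linarith [h2]
  have hImne : (omegaK DK).im ≠ 0 := by rw [hIm]; positivity
  have h4 : ((ℓ : ℝ) * g) = ((b : ℝ) * g') := mul_right_cancel₀ hImne h3
  have h5 : ((ℓ * g : ℕ) : ℤ) = b * (g' : ℤ) := by exact_mod_cast h4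
  have h6 : (g' : ℤ) ∣ ((ℓ * g : ℕ) : ℤ) := ⟨b, by linarith [h5]⟩
  exact_mod_cast h6

/-- If `E = ℂ/Λ` has CM by the order of conductor `f`, `E' = ℂ/Λ'` has CM
by the order of conductor `f'` (orders in the imaginary quadratic field of fundamental
discriminant `D_K < 0`), and there is an `ℓ`-isogeny `E → E'` (given by multiplication by
some `λ ≠ 0` with `λΛ ⊆ Λ'` of index `ℓ`), then `f' = f`, `f' = ℓf`, or `f = ℓf'`. -/
theorem cm_conductor_of_ell_isogeny
    (DK : ℤ) (hDK : DK < 0) (hfund : IsFundamentalDiscriminant DK)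
    (Λ Λ' : AddSubgroup ℂ) (hΛ : IsComplexLattice Λ) (hΛ' : IsComplexLattice Λ')
    (f f' : ℕ) (hf : 0 < f) (hf' : 0 < f')
    (hE : endoSet Λ = orderSet DK f) (hE' : endoSet Λ' = orderSet DK f')
    (ℓ : ℕ) (hℓ : ℓ.Prime)
    (lam : ℂ) (hlam : lam ≠ 0)
    (hmap : AddSubgroup.map (AddMonoidHom.mulLeft lam) Λ ≤ Λ')
    (hdeg : Nat.card
        (Λ' ⧸ (AddSubgroup.map (AddMonoidHom.mulLeft lam) Λ).addSubgroupOf Λ') = ℓ) :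
    f' = f ∨ f' = ℓ * f ∨ f = ℓ * f' := by
  set ω := omegaK DK with hω
  -- Step 1: ℓ·Λ' ⊆ λ·Λ
  have hsub : ∀ w ∈ Λ', ∃ u ∈ Λ, lam * u = (ℓ : ℂ) * w := by
    intro w hw
    set H := (AddSubgroup.map (AddMonoidHom.mulLeft lam) Λ).addSubgroupOf Λ' with hH
    have h0 : ℓ • ((⟨w, hw⟩ : Λ') : Λ' ⧸ H) = 0 := by
      rw [← hdeg]; exact card_nsmul_eq_zero'
    rw [← QuotientAddGroup.mk_nsmul, QuotientAddGroup.eq_zero_iff] at h0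
    have h1 : ((ℓ • (⟨w, hw⟩ : Λ') : Λ') : ℂ) ∈
        AddSubgroup.map (AddMonoidHom.mulLeft lam) Λ := h0
    obtain ⟨u, hu, huv⟩ := h1
    refine ⟨u, hu, ?_⟩
    have : (lam * u : ℂ) = ((ℓ • (⟨w, hw⟩ : Λ') : Λ') : ℂ) := huv
    simpa [nsmul_eq_mul] using this
  -- Step 2: ℓ·(f·ω) ∈ End(Λ')
  have hzf : (f : ℂ) * ω ∈ endoSet Λ := by
    rw [hE]; exact ⟨0, 1, by push_cast; ring⟩
  have h1 : (ℓ : ℂ) * ((f : ℂ) * ω) ∈ endoSet Λ' := by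
    intro w hw
    obtain ⟨u, hu, huv⟩ := hsub w hw
    have hfu : (f : ℂ) * ω * u ∈ Λ := hzf u hu
    have : lam * ((f : ℂ) * ω * u) ∈ Λ' := hmap ⟨_, hfu, rfl⟩
    have heq : (ℓ : ℂ) * ((f : ℂ) * ω) * w = lam * ((f : ℂ) * ω * u) := by
      calc (ℓ : ℂ) * ((f : ℂ) * ω) * w = (f : ℂ) * ω * ((ℓ : ℂ) * w) := by ring
        _ = (f : ℂ) * ω * (lam * u) := by rw [huv]
        _ = lam * ((f : ℂ) * ω * u) := by ring
    rwa [heq]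
  -- Step 3: ℓ·(f'·ω) ∈ End(Λ)
  have hzf' : (f' : ℂ) * ω ∈ endoSet Λ' := by
    rw [hE']; exact ⟨0, 1, by push_cast; ring⟩
  have h2 : (ℓ : ℂ) * ((f' : ℂ) * ω) ∈ endoSet Λ := by
    intro w hw
    have hw' : lam * w ∈ Λ' := hmap ⟨w, hw, rfl⟩
    have hw'' : (f' : ℂ) * ω * (lam * w) ∈ Λ' := hzf' _ hw'
    obtain ⟨u, hu, huv⟩ := hsub _ hw''
    have : lam * u = lam * ((ℓ : ℂ) * ((f' : ℂ) * ω) * w) := by rw [huv]; ring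
    have hu' : u = (ℓ : ℂ) * ((f' : ℂ) * ω) * w := mul_left_cancel₀ hlam this
    rwa [← hu']
  -- Step 4: divisibilities
  have hd1 : f' ∣ ℓ * f := dvd_of_mem_orderSet DK hDK f f' ℓ (by rw [← hE']; exact h1)
  have hd2 : f ∣ ℓ * f' := dvd_of_mem_orderSet DK hDK f' f ℓ (by rw [← hE]; exact h2)
  -- Step 5: arithmetic
  obtain ⟨a, ha⟩ := hd1
  obtain ⟨b, hb⟩ := hd2
  have hab : a * b = ℓ ^ 2 := by
    have : f * (ℓ ^ 2) = f * (a * b) := by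
      have := congrArg (ℓ * ·) hb
      nlinarith [ha, hb]
    exact (Nat.eq_of_mul_eq_mul_left hf this).symm
  have hadvd : a ∣ ℓ ^ 2 := ⟨b, hab.symm⟩
  obtain ⟨k, hk2, hk⟩ := (Nat.dvd_prime_pow hℓ).mp hadvd
  interval_cases k
  · -- a = 1 : f' = ℓ f
    right; left
    rw [pow_zero] at hk; rw [hk] at ha
    omega
  · -- a = ℓ : f' = f
    left
    rw [pow_one] at hk; rw [hk] at ha
    have h : f' * ℓ = f * ℓ := by rw [← ha]; ring
    exact Nat.eq_of_mul_eq_mul_right hℓ.pos h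
  · -- a = ℓ² : f = ℓ f'
    right; right
    rw [hk] at ha
    have h : ℓ * f = ℓ * (ℓ * f') := by rw [ha]; ring
    exact Nat.eq_of_mul_eq_mul_left hℓ.pos h
end
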